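/- Let d ≥ 2, r ≥ 1, ε > 0, and let γ₁, …, γ_r ∈ SL_d(ℝ) be matrices such that the 2r matrices γ₁, …, γ_r, γ₁⁻¹, …, γ_r⁻¹ are pairwise distinct and form a symmetric set S of proximal matrices with both S and the dual set S* ε-Schottky. Then the group homomorphism from the free group F_r on r generators to SL_d(ℝ) sending the i-th free generator to γᵢ is injective; in particular, the subgroup of SL_d(ℝ) generated by γ₁, …, γ_r is a free group of rank r. -/

import Mathlib

open Polynomial Filter
open scoped Classical

noncomputable section

namespace Amalgam

variable {W : Type*} [NormedAddCommGroup W] [NormedSpace ℝ W]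

/-- The distance between two subspaces of a normed space: the infimum of `‖x - y‖` over
unit vectors `x ∈ X`, `y ∈ Y`.  For one-dimensional subspaces this is the metric on
projective space; for a line and a hyperplane it is the distance from the point of
projective space to the subset of projective space determined by the hyperplane. -/
def sdist (X Y : Submodule ℝ W) : ℝ :=
  sInf {r : ℝ | ∃ x ∈ X, ∃ y ∈ Y, ‖x‖ = 1 ∧ ‖y‖ = 1 ∧ r = ‖x - y‖}

/-- A point of projective space, i.e. a line through the origin. -/
def IsLine (X : Submodule ℝ W) : Prop := Module.finrank ℝ X = 1

/-- The diameter of the projective space of `W`. -/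
def projDiam (W : Type*) [NormedAddCommGroup W] [NormedSpace ℝ W] : ℝ :=
  sSup {t : ℝ | ∃ X Y : Submodule ℝ W, IsLine X ∧ IsLine Y ∧ t = sdist X Y}

variable [FiniteDimensional ℝ W]

/-- `f` is proximal: its characteristic polynomial has a unique complex root of maximal
modulus, and this root is real with multiplicity one. -/
def IsProximal (f : W →ₗ[ℝ] W) : Prop :=
  ∃ lam : ℝ,
    (Polynomial.map (algebraMap ℝ ℂ) (LinearMap.charpoly f)).roots.count (lam : ℂ) = 1 ∧
    ∀ μ ∈ (Polynomial.map (algebraMap ℝ ℂ) (LinearMap.charpoly f)).roots,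
      μ ≠ (lam : ℂ) → ‖μ‖ < |lam|

/-- The top eigenvalue of a proximal transformation (junk value `0` otherwise). -/
def topEig (f : W →ₗ[ℝ] W) : ℝ :=
  if h : IsProximal f then h.choose else 0

/-- The attracting eigenline `γ⁺` of a proximal transformation: the eigenspace of the
eigenvalue of maximal modulus. -/
def attLine (f : W →ₗ[ℝ] W) : Submodule ℝ W :=
  LinearMap.ker (f - topEig f • LinearMap.id)

/-- The repelling hyperplane `γ⁻` of a proximal transformation: the unique invariant
complement of the attracting line. -/
def repHyp (f : W →ₗ[ℝ] W) : Submodule ℝ W :=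
  if h : ∃ H : Submodule ℝ W, Submodule.map f H ≤ H ∧ IsCompl (attLine f) H
  then h.choose else ⊥

/-- `f` is `ε`-proximal: it is proximal, `dist(γ⁺, γ⁻) ≥ 2ε`, the induced action on
projective space is `ε`-Lipschitz on `B(γ⁻, ε)`, and maps `B(γ⁻, ε)` into `b(γ⁺, ε)`. -/
def IsEpsProximal (ε : ℝ) (f : W →ₗ[ℝ] W) : Prop :=
  IsProximal f ∧
  2 * ε ≤ sdist (attLine f) (repHyp f) ∧
  (∀ X Y : Submodule ℝ W, IsLine X → IsLine Y →
      ε ≤ sdist X (repHyp f) → ε ≤ sdist Y (repHyp f) →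
      sdist (X.map f) (Y.map f) ≤ ε * sdist X Y) ∧
  (∀ X : Submodule ℝ W, IsLine X → ε ≤ sdist X (repHyp f) →
      ε ≥ sdist (X.map f) (attLine f))

/-- An indexed family `f` (with `g i` playing the role of `(f i)⁻¹`) is `ε`-Schottky:
each member is `ε`-proximal and `dist((fᵢ)⁺, (fⱼ⁻¹)⁻) ≥ 6ε` for `i ≠ j`. -/
def IsSchottkyFam {ι : Type*} (ε : ℝ) (f g : ι → (W →ₗ[ℝ] W)) : Prop :=
  (∀ i, IsEpsProximal ε (f i)) ∧
  ∀ i j, i ≠ j → 6 * ε ≤ sdist (attLine (f i)) (repHyp (g j))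


abbrev E (d : ℕ) := EuclideanSpace ℝ (Fin d)
abbrev SL (d : ℕ) := Matrix.SpecialLinearGroup (Fin d) ℝ
abbrev Dual' (d : ℕ) := StrongDual ℝ (E d)

/-- The linear endomorphism of Euclidean space determined by a matrix in `SL_d(ℝ)`. -/
def toEnd {d : ℕ} (g : SL d) : E d →ₗ[ℝ] E d :=
  Matrix.toEuclideanLin (g : Matrix (Fin d) (Fin d) ℝ)

/-- The same map as a continuous linear map. -/
def toCLM {d : ℕ} (g : SL d) : E d →L[ℝ] E d :=
  LinearMap.toContinuousLinearMap (toEnd g)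

/-- The dual transformation `γ* : θ ↦ θ ∘ γ⁻¹` acting on the dual space `(ℝ^d)*`
(equipped with the dual norm). -/
def dualEnd {d : ℕ} (g : SL d) : Dual' d →ₗ[ℝ] Dual' d where
  toFun θ := θ.comp (toCLM g⁻¹)
  map_add' θ₁ θ₂ := by ext v; simp
  map_smul' c θ := by ext v; simp

/-- The kernel of a set of functionals: `{v : φ(v) = 0 for all φ ∈ Y}`. -/
def dualKer {d : ℕ} (Y : Submodule ℝ (Dual' d)) : Submodule ℝ (E d) where
  carrier := {v | ∀ φ ∈ Y, φ v = 0}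
  add_mem' := by
    intro a b ha hb φ hφ
    simp [map_add, ha φ hφ, hb φ hφ]
  zero_mem' := by intro φ hφ; simp
  smul_mem' := by
    intro c a ha φ hφ
    simp [ha φ hφ]

/-- The annihilator of a subspace inside the dual space. -/
def annih {d : ℕ} (U : Submodule ℝ (E d)) : Submodule ℝ (Dual' d) where
  carrier := {φ | ∀ v ∈ U, φ v = 0}
  add_mem' := by
    intro a b ha hb v hv
    simp [ha v hv, hb v hv]
  zero_mem' := by intro v hv; simp
  smul_mem' := by
    intro c a ha v hv
    simp [ha v hv]

/-- The operator norm of `g ∈ SL_d(ℝ)` (with respect to the Euclidean norm). -/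
def opN {d : ℕ} (g : SL d) : ℝ := ‖toCLM g‖

/-- The second compound matrix of a `d × d` matrix: the matrix of `2 × 2` minors,
indexed by increasingly ordered pairs. -/
def compound2 {d : ℕ} (g : Matrix (Fin d) (Fin d) ℝ) :
    Matrix {p : Fin d × Fin d // p.1 < p.2} {p : Fin d × Fin d // p.1 < p.2} ℝ :=
  fun p q => g p.1.1 q.1.1 * g p.1.2 q.1.2 - g p.1.1 q.1.2 * g p.1.2 q.1.1

/-- The operator norm of the second compound matrix (Euclidean norms). -/
def c2norm {d : ℕ} (g : Matrix (Fin d) (Fin d) ℝ) : ℝ :=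
  ‖LinearMap.toContinuousLinearMap (Matrix.toEuclideanLin (compound2 g))‖


/-- A reduced word in the set `S`: a nonempty finite sequence of elements of `S` in which
no letter is followed by its inverse. -/
def IsReducedWord {d : ℕ} (S : Set (SL d)) (w : List (SL d)) : Prop :=
  w ≠ [] ∧ (∀ a ∈ w, a ∈ S) ∧ List.Chain' (fun a b => b ≠ a⁻¹) w

/-- An infinite reduced word in the set `S`. -/
def IsInfReducedWord {d : ℕ} (S : Set (SL d)) (x : ℕ → SL d) : Prop :=
  (∀ i, x i ∈ S) ∧ ∀ i, x (i + 1) ≠ (x i)⁻¹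

/-- The partial product `x₀ x₁ ⋯ x_n` of an infinite word. -/
def wordProd {d : ℕ} (x : ℕ → SL d) (n : ℕ) : SL d :=
  ((List.range (n + 1)).map x).prod

/-- A family of matrices is symmetric if it is closed under inverses. -/
def SymmFam {ι : Type*} {d : ℕ} (γ : ι → SL d) : Prop :=
  ∀ i, ∃ j, γ j = (γ i)⁻¹

/-- The family `γ` is `ε`-Schottky as acting on `ℙ(ℝ^d)`. -/
def PrimalSchottky {ι : Type*} {d : ℕ} (ε : ℝ) (γ : ι → SL d) : Prop :=
  IsSchottkyFam ε (fun i => toEnd (γ i)) (fun i => toEnd ((γ i)⁻¹))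

/-- The dual family `γ*` is `ε`-Schottky as acting on `ℙ((ℝ^d)*)`. -/
def DualSchottky {ι : Type*} {d : ℕ} (ε : ℝ) (γ : ι → SL d) : Prop :=
  IsSchottkyFam ε (fun i => dualEnd (γ i)) (fun i => dualEnd ((γ i)⁻¹))

/-- `g` is biproximal: both `g` and `g⁻¹` are proximal. -/
def IsBiproximal {d : ℕ} (g : SL d) : Prop :=
  IsProximal (toEnd g) ∧ IsProximal (toEnd g⁻¹)

/-- A symmetric family of pairwise distinct biproximal matrices is well-positioned if the
attracting lines are pairwise distinct and `γᵢ⁺ ⊄ γⱼ⁻` whenever `γⱼ ≠ γᵢ⁻¹`. -/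
def WellPositioned {ι : Type*} {d : ℕ} (γ : ι → SL d) : Prop :=
  (∀ i, IsBiproximal (γ i)) ∧
  (∀ i j, i ≠ j → attLine (toEnd (γ i)) ≠ attLine (toEnd (γ j))) ∧
  (∀ i j, γ j ≠ (γ i)⁻¹ → ¬ attLine (toEnd (γ i)) ≤ repHyp (toEnd (γ j)))

/-- The spectral radius: maximal modulus of the complex roots of the characteristic
polynomial. -/
def specRad {W : Type*} [NormedAddCommGroup W] [NormedSpace ℝ W] [FiniteDimensional ℝ W]
    (f : W →ₗ[ℝ] W) : ℝ :=
  sSup {t : ℝ | ∃ μ ∈ (Polynomial.map (algebraMap ℝ ℂ) (LinearMap.charpoly f)).roots,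
      t = ‖μ‖}

/-!
Ping-pong on projective space. Read a nonempty reduced word from right to left. A letter `γ` maps
the lines that are `ε`-far from `γ⁻` `ε`-Lipschitzly into the `ε`-ball around `γ⁺`; since the next
letter `δ` is not `γ⁻¹`, the separation `dist(γ⁺, δ⁻) ≥ 6ε` makes that ball `ε`-far from `δ⁻`.
So the word is `ε`-Lipschitz on the lines `ε`-far from the repelling hyperplane of its last letter,
and there are two distinct such lines. Separation applied to `γ` and `γ⁻¹` gives
`6ε ≤ dist(γ⁺, γ⁻) ≤ 2`, so `ε < 1` and the word is not the identity.
-/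

section ProjectiveDistance

variable {V : Type*} [NormedAddCommGroup V] [NormedSpace ℝ V] {X Y Z : Submodule ℝ V} {u v x y : V}

theorem sdist_nonneg (X Y : Submodule ℝ V) : 0 ≤ sdist X Y :=
  Real.sInf_nonneg (by rintro _ ⟨x, -, y, -, -, -, rfl⟩; positivity)

theorem sdist_le_norm_sub (hx : x ∈ X) (hy : y ∈ Y) (hx1 : ‖x‖ = 1) (hy1 : ‖y‖ = 1) :
    sdist X Y ≤ ‖x - y‖ :=
  csInf_le ⟨0, by rintro _ ⟨x, -, y, -, -, -, rfl⟩; positivity⟩ ⟨x, hx, y, hy, hx1, hy1, rfl⟩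

theorem sdist_eq_zero_of_not_exists_unit (h : ¬((∃ x ∈ X, ‖x‖ = 1) ∧ ∃ y ∈ Y, ‖y‖ = 1)) :
    sdist X Y = 0 := by
  unfold sdist
  convert Real.sInf_empty
  refine Set.eq_empty_of_forall_notMem ?_
  rintro _ ⟨x, hx, y, hy, hx1, hy1, -⟩
  exact h ⟨⟨x, hx, hx1⟩, y, hy, hy1⟩

theorem exists_unit_of_sdist_pos (h : 0 < sdist X Y) :
    (∃ x ∈ X, ‖x‖ = 1) ∧ ∃ y ∈ Y, ‖y‖ = 1 := by
  by_contra hXY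
  exact h.ne' (sdist_eq_zero_of_not_exists_unit hXY)

theorem sdist_le_two (X Y : Submodule ℝ V) : sdist X Y ≤ 2 := by
  by_cases hXY : (∃ x ∈ X, ‖x‖ = 1) ∧ ∃ y ∈ Y, ‖y‖ = 1
  · obtain ⟨⟨x, hx, hx1⟩, y, hy, hy1⟩ := hXY
    calc sdist X Y ≤ ‖x - y‖ := sdist_le_norm_sub hx hy hx1 hy1
      _ ≤ ‖x‖ + ‖y‖ := norm_sub_le x y
      _ = 2 := by rw [hx1, hy1]; norm_num
  · rw [sdist_eq_zero_of_not_exists_unit hXY]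
    norm_num

theorem sdist_comm (X Y : Submodule ℝ V) : sdist X Y = sdist Y X := by
  unfold sdist
  congr 1
  ext r
  constructor <;>
  · rintro ⟨x, hx, y, hy, hx1, hy1, rfl⟩
    exact ⟨y, hy, x, hx, hy1, hx1, norm_sub_rev x y⟩

theorem norm_sub_normalize (hv : v ≠ 0) : ‖v - NormedSpace.normalize v‖ = |‖v‖ - 1| := by
  calc ‖v - NormedSpace.normalize v‖ = ‖(‖v‖ - 1) • NormedSpace.normalize v‖ := by
        rw [sub_smul, one_smul, NormedSpace.norm_smul_normalize]
    _ = |‖v‖ - 1| := by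
        rw [norm_smul, NormedSpace.norm_normalize hv, mul_one, Real.norm_eq_abs]

theorem sdist_span_singleton_le (hu : ‖u‖ = 1) (hv : v ≠ 0) :
    sdist (ℝ ∙ u) (ℝ ∙ v) ≤ 2 * ‖u - v‖ := by
  have hv_unit : ‖NormedSpace.normalize v‖ = 1 := NormedSpace.norm_normalize hv
  have hv_norm : |‖v‖ - 1| ≤ ‖v - u‖ := by
    simpa only [hu] using abs_norm_sub_norm_le v u
  calc sdist (ℝ ∙ u) (ℝ ∙ v) ≤ ‖u - NormedSpace.normalize v‖ :=
        sdist_le_norm_sub (Submodule.mem_span_singleton_self u)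
          ((ℝ ∙ v).smul_mem _ (Submodule.mem_span_singleton_self v)) hu hv_unit
    _ ≤ ‖u - v‖ + ‖v - NormedSpace.normalize v‖ := norm_sub_le_norm_sub_add_norm_sub _ _ _
    _ ≤ 2 * ‖u - v‖ := by
      linarith [norm_sub_normalize hv, norm_sub_rev v u]

theorem isLine_span_singleton (hv : v ≠ 0) : IsLine (ℝ ∙ v) :=
  finrank_span_singleton hv

theorem IsLine.ne_bot (hX : IsLine X) : X ≠ ⊥ := by
  rintro rfl
  rw [IsLine, finrank_bot] at hX
  exact zero_ne_one hX

theorem IsLine.exists_unit (hX : IsLine X) : ∃ u ∈ X, ‖u‖ = 1 := by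
  obtain ⟨v, hv, hv0⟩ := Submodule.exists_mem_ne_zero_of_ne_bot hX.ne_bot
  exact ⟨NormedSpace.normalize v, X.smul_mem _ hv, NormedSpace.norm_normalize hv0⟩

theorem IsLine.eq_span_singleton (hX : IsLine X) (hu : u ∈ X) (hu0 : u ≠ 0) : X = ℝ ∙ u := by
  have : FiniteDimensional ℝ X := Module.finite_of_finrank_eq_succ hX
  refine (Submodule.eq_of_le_of_finrank_le ((Submodule.span_singleton_le_iff_mem u X).2 hu)
    ?_).symm
  rw [hX, finrank_span_singleton hu0]

theorem IsLine.eq_or_eq_neg (hX : IsLine X) (hu : u ∈ X) (hu1 : ‖u‖ = 1) (hx : x ∈ X)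
    (hx1 : ‖x‖ = 1) : x = u ∨ x = -u := by
  rw [hX.eq_span_singleton hu (norm_ne_zero_iff.1 (by rw [hu1]; exact one_ne_zero)),
    Submodule.mem_span_singleton] at hx
  obtain ⟨c, rfl⟩ := hx
  rw [norm_smul, hu1, mul_one, Real.norm_eq_abs] at hx1
  rcases abs_eq zero_le_one |>.1 hx1 with rfl | rfl
  · exact Or.inl (one_smul ℝ u)
  · exact Or.inr (neg_one_smul ℝ u)

theorem IsLine.map_of_injective {W' : Type*} [NormedAddCommGroup W'] [NormedSpace ℝ W']
    (hX : IsLine X) {f : V →ₗ[ℝ] W'} (hf : Function.Injective f) : IsLine (X.map f) :=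
  (Submodule.equivMapOfInjective f hf X).finrank_eq.symm.trans hX

/-- The unit vectors of a line agree up to sign and `Y` is symmetric, so the triangle inequality
through a line holds although `sdist` is not a metric on subspaces. -/
theorem IsLine.sdist_le_add (hX : IsLine X) (Y Z : Submodule ℝ V) :
    sdist Y Z ≤ sdist X Y + sdist X Z := by
  by_cases hYZ : (∃ y ∈ Y, ‖y‖ = 1) ∧ ∃ z ∈ Z, ‖z‖ = 1
  swap
  · rw [sdist_eq_zero_of_not_exists_unit hYZ]
    exact add_nonneg (sdist_nonneg X Y) (sdist_nonneg X Z)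
  obtain ⟨⟨y₀, hy₀, hy₀1⟩, z₀, hz₀, hz₀1⟩ := hYZ
  obtain ⟨u, hu, hu1⟩ := hX.exists_unit
  have key : ∀ x ∈ X, ∀ y ∈ Y, ∀ x' ∈ X, ∀ z ∈ Z, ‖x‖ = 1 → ‖y‖ = 1 → ‖x'‖ = 1 → ‖z‖ = 1 →
      sdist Y Z ≤ ‖x - y‖ + ‖x' - z‖ := by
    intro x hx y hy x' hx' z hz hx1 hy1 hx'1 hz1
    rcases hX.eq_or_eq_neg hx hx1 hx' hx'1 with rfl | rfl
    · calc sdist Y Z ≤ ‖y - x'‖ + ‖x' - z‖ :=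
            (sdist_le_norm_sub hy hz hy1 hz1).trans (norm_sub_le_norm_sub_add_norm_sub _ _ _)
        _ = ‖x' - y‖ + ‖x' - z‖ := by rw [norm_sub_rev]
    · calc sdist Y Z ≤ ‖-y - -x‖ + ‖-x - z‖ :=
            (sdist_le_norm_sub (Y.neg_mem hy) hz (by rwa [norm_neg]) hz1).trans
              (norm_sub_le_norm_sub_add_norm_sub _ _ _)
        _ = ‖x - y‖ + ‖-x - z‖ := by rw [neg_sub_neg]
  have hXY : ∀ x' ∈ X, ∀ z ∈ Z, ‖x'‖ = 1 → ‖z‖ = 1 → sdist Y Z - ‖x' - z‖ ≤ sdist X Y := by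
    intro x' hx' z hz hx'1 hz1
    refine le_csInf ⟨_, u, hu, y₀, hy₀, hu1, hy₀1, rfl⟩ ?_
    rintro _ ⟨x, hx, y, hy, hx1, hy1, rfl⟩
    linarith [key x hx y hy x' hx' z hz hx1 hy1 hx'1 hz1]
  have hXZ : sdist Y Z - sdist X Y ≤ sdist X Z := by
    refine le_csInf ⟨_, u, hu, z₀, hz₀, hu1, hz₀1, rfl⟩ ?_
    rintro _ ⟨x', hx', z, hz, hx'1, hz1, rfl⟩
    linarith [hXY x' hx' z hz hx'1 hz1]
  linarith

theorem IsLine.sdist_pos (hX : IsLine X) (hY : IsLine Y) (hne : X ≠ Y) : 0 < sdist X Y := by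
  obtain ⟨u, hu, hu1⟩ := hX.exists_unit
  obtain ⟨v, hv, hv1⟩ := hY.exists_unit
  have hvX : v ∉ X := fun hvX =>
    have hv0 : v ≠ 0 := norm_ne_zero_iff.1 (by rw [hv1]; exact one_ne_zero)
    hne ((hX.eq_span_singleton hvX hv0).trans (hY.eq_span_singleton hv hv0).symm)
  have h_sub : 0 < ‖u - v‖ := norm_pos_iff.2 fun h => hvX (sub_eq_zero.1 h ▸ hu)
  have h_add : 0 < ‖u + v‖ :=
    norm_pos_iff.2 fun h => hvX (neg_eq_of_add_eq_zero_right h ▸ X.neg_mem hu)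
  refine (lt_min h_sub h_add).trans_le (le_csInf ⟨_, u, hu, v, hv, hu1, hv1, rfl⟩ ?_)
  rintro _ ⟨x, hx, y, hy, hx1, hy1, rfl⟩
  rcases hX.eq_or_eq_neg hu hu1 hx hx1 with rfl | rfl <;>
    rcases hY.eq_or_eq_neg hv hv1 hy hy1 with rfl | rfl
  · exact min_le_left _ _
  · rw [sub_neg_eq_add]
    exact min_le_right _ _
  · rw [← neg_add', norm_neg]
    exact min_le_right _ _
  · rw [neg_sub_neg, norm_sub_rev]
    exact min_le_left _ _

end ProjectiveDistance

section PingPong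

variable {ε : ℝ} {f : Module.End ℝ W}

theorem IsEpsProximal.le_one (hf : IsEpsProximal ε f) : ε ≤ 1 := by
  linarith [hf.2.1, sdist_le_two (attLine f) (repHyp f)]

theorem IsEpsProximal.exists_isLine_ne (hε : 0 < ε) (hf : IsEpsProximal ε f) :
    ∃ X Y : Submodule ℝ W, IsLine X ∧ IsLine Y ∧ X ≠ Y ∧
      ε ≤ sdist X (repHyp f) ∧ ε ≤ sdist Y (repHyp f) := by
  obtain ⟨-, hsep, -, -⟩ := hf
  obtain ⟨⟨u, hu, hu1⟩, y, hy, hy1⟩ := exists_unit_of_sdist_pos (by linarith : 0 < sdist _ _)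
  have hu0 : u ≠ 0 := norm_ne_zero_iff.1 (by rw [hu1]; exact one_ne_zero)
  have hX := isLine_span_singleton hu0
  have hX_far : 2 * ε ≤ sdist (ℝ ∙ u) (repHyp f) := by
    have h := hX.sdist_le_add (attLine f) (repHyp f)
    have h0 : sdist (ℝ ∙ u) (attLine f) ≤ 0 := by
      simpa using sdist_le_norm_sub (Submodule.mem_span_singleton_self u) hu hu1 hu1
    linarith
  have hyX : y ∉ ℝ ∙ u := fun hyX => by
    have h0 : sdist (ℝ ∙ u) (repHyp f) ≤ 0 := by simpa using sdist_le_norm_sub hyX hy hy1 hy1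
    linarith
  set v := u + (ε / 2) • y
  have hvX : v ∉ ℝ ∙ u := fun hvX => by
    have h := (ℝ ∙ u).sub_mem hvX (Submodule.mem_span_singleton_self u)
    rw [add_sub_cancel_left, Submodule.smul_mem_iff _ (by positivity)] at h
    exact hyX h
  have hv0 : v ≠ 0 := fun h => hvX (h ▸ (ℝ ∙ u).zero_mem)
  have hXY : sdist (ℝ ∙ u) (ℝ ∙ v) ≤ ε := by
    have h := sdist_span_singleton_le hu1 hv0
    rwa [show u - v = -((ε / 2) • y) by simp [v], norm_neg, norm_smul, hy1, mul_one,
      Real.norm_of_nonneg (by positivity), mul_div_cancel₀ _ two_ne_zero] at h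
  have hY := isLine_span_singleton hv0
  refine ⟨ℝ ∙ u, ℝ ∙ v, hX, hY,
    fun h => hvX (h ▸ Submodule.mem_span_singleton_self v), by linarith, ?_⟩
  have h := hY.sdist_le_add (ℝ ∙ u) (repHyp f)
  rw [sdist_comm (ℝ ∙ v)] at h
  linarith

theorem isLine_map_prod_of_isChain (hε : 0 ≤ ε) {L : List (Module.End ℝ W)}
    (hinj : ∀ g ∈ f :: L, Function.Injective g) (hprox : ∀ g ∈ f :: L, IsEpsProximal ε g)
    (hchain : (f :: L).IsChain fun g h => 6 * ε ≤ sdist (attLine h) (repHyp g))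
    {X : Submodule ℝ W} (hX : IsLine X)
    (hXL : ε ≤ sdist X (repHyp ((f :: L).getLast (List.cons_ne_nil f L)))) :
    IsLine (X.map (f :: L).prod) ∧ sdist (X.map (f :: L).prod) (attLine f) ≤ ε := by
  induction L generalizing f with
  | nil =>
    rw [List.prod_singleton]
    exact ⟨hX.map_of_injective (hinj f (by simp)), (hprox f (by simp)).2.2.2 X hX hXL⟩
  | cons g L ih =>
    obtain ⟨hfg, hchain⟩ := List.isChain_cons_cons.1 hchain
    obtain ⟨hX', hX'g⟩ := ih (fun h hh => hinj h (.tail _ hh)) (fun h hh => hprox h (.tail _ hh))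
      hchain (by simpa using hXL)
    have hX'f : ε ≤ sdist (X.map (g :: L).prod) (repHyp f) := by
      linarith [hX'.sdist_le_add (attLine g) (repHyp f)]
    rw [List.prod_cons, Module.End.mul_eq_comp, Submodule.map_comp]
    exact ⟨hX'.map_of_injective (hinj f (by simp)), (hprox f (by simp)).2.2.2 _ hX' hX'f⟩

theorem sdist_map_prod_le_of_isChain (hε : 0 ≤ ε) {L : List (Module.End ℝ W)}
    (hinj : ∀ g ∈ f :: L, Function.Injective g) (hprox : ∀ g ∈ f :: L, IsEpsProximal ε g)
    (hchain : (f :: L).IsChain fun g h => 6 * ε ≤ sdist (attLine h) (repHyp g))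
    {X Y : Submodule ℝ W} (hX : IsLine X) (hY : IsLine Y)
    (hXL : ε ≤ sdist X (repHyp ((f :: L).getLast (List.cons_ne_nil f L))))
    (hYL : ε ≤ sdist Y (repHyp ((f :: L).getLast (List.cons_ne_nil f L)))) :
    sdist (X.map (f :: L).prod) (Y.map (f :: L).prod) ≤ ε * sdist X Y := by
  induction L generalizing f with
  | nil =>
    rw [List.prod_singleton]
    exact (hprox f (by simp)).2.2.1 X Y hX hY hXL hYL
  | cons g L ih =>
    have hinj' : ∀ h ∈ g :: L, Function.Injective h := fun h hh => hinj h (.tail _ hh)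
    have hprox' : ∀ h ∈ g :: L, IsEpsProximal ε h := fun h hh => hprox h (.tail _ hh)
    obtain ⟨hfg, hchain⟩ := List.isChain_cons_cons.1 hchain
    obtain ⟨hX', hX'g⟩ :=
      isLine_map_prod_of_isChain hε hinj' hprox' hchain hX (by simpa using hXL)
    obtain ⟨hY', hY'g⟩ :=
      isLine_map_prod_of_isChain hε hinj' hprox' hchain hY (by simpa using hYL)
    rw [List.prod_cons, Module.End.mul_eq_comp, Submodule.map_comp, Submodule.map_comp]
    calc _ ≤ ε * sdist (X.map (g :: L).prod) (Y.map (g :: L).prod) :=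
          (hprox f (by simp)).2.2.1 _ _ hX' hY'
            (by linarith [hX'.sdist_le_add (attLine g) (repHyp f)])
            (by linarith [hY'.sdist_le_add (attLine g) (repHyp f)])
      _ ≤ sdist (X.map (g :: L).prod) (Y.map (g :: L).prod) :=
          mul_le_of_le_one_left (sdist_nonneg _ _) (hprox f (by simp)).le_one
      _ ≤ ε * sdist X Y := ih hinj' hprox' hchain (by simpa using hXL) (by simpa using hYL)

theorem prod_ne_one_of_isChain (hε : 0 < ε) (hε_lt_one : ε < 1) {L : List (Module.End ℝ W)}
    (hinj : ∀ g ∈ f :: L, Function.Injective g) (hprox : ∀ g ∈ f :: L, IsEpsProximal ε g)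
    (hchain : (f :: L).IsChain fun g h => 6 * ε ≤ sdist (attLine h) (repHyp g)) :
    (f :: L).prod ≠ 1 := by
  intro h_one
  obtain ⟨X, Y, hX, hY, hXY, hXL, hYL⟩ := (hprox _ (List.getLast_mem _)).exists_isLine_ne hε
  have h := sdist_map_prod_le_of_isChain hε.le hinj hprox hchain hX hY hXL hYL
  rw [h_one, Module.End.one_eq_id, Submodule.map_id, Submodule.map_id] at h
  nlinarith [hX.sdist_pos hY hXY]

end PingPong

section FreeGroup

variable {ι G : Type*} [Group G]

def letter (γ : ι → G) (p : ι × Bool) : G :=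
  cond p.2 (γ p.1) (γ p.1)⁻¹

theorem letter_flip (γ : ι → G) (p : ι × Bool) : letter γ (p.1, !p.2) = (letter γ p)⁻¹ := by
  rcases p with ⟨i, _ | _⟩ <;> simp [letter]

theorem lift_eq_prod_map_letter (γ : ι → G) (w : FreeGroup ι) :
    FreeGroup.lift γ w = (w.toWord.map (letter γ)).prod := by
  conv_lhs => rw [← FreeGroup.mk_toWord (x := w)]
  rfl

theorem lift_injective_of_schottky {ε : ℝ} (ρ : G →* Module.End ℝ W) (γ : ι → G) (hε : 0 < ε)
    (hprox : ∀ p, IsEpsProximal ε (ρ (letter γ p)))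
    (hsep : ∀ p q, p ≠ q →
      6 * ε ≤ sdist (attLine (ρ (letter γ p))) (repHyp (ρ (letter γ q)⁻¹))) :
    Function.Injective (FreeGroup.lift γ) := by
  have hinj (g : G) : Function.Injective (ρ g) :=
    Function.LeftInverse.injective (g := ρ g⁻¹) fun x => by
      rw [← Module.End.mul_apply, ← map_mul, inv_mul_cancel, map_one, Module.End.one_apply]
  have hsep_flip (p q : ι × Bool) (hpq : q ≠ (p.1, !p.2)) :
      6 * ε ≤ sdist (attLine (ρ (letter γ q))) (repHyp (ρ (letter γ p))) := by
    simpa only [letter_flip, inv_inv] using hsep q (p.1, !p.2) hpq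
  rw [injective_iff_map_eq_one]
  intro w hw
  by_contra hw1
  obtain ⟨p, ps, hwp⟩ := List.exists_cons_of_ne_nil (mt FreeGroup.toWord_eq_nil_iff.1 hw1)
  have hε_lt_one : ε < 1 := by
    linarith [hsep_flip p p (by simp [Prod.ext_iff]), sdist_le_two (attLine (ρ (letter γ p)))
      (repHyp (ρ (letter γ p)))]
  set F := ρ ∘ letter γ
  refine prod_ne_one_of_isChain (f := F p) (L := ps.map F) hε hε_lt_one ?_ ?_ ?_ ?_
  · rw [← List.map_cons, List.forall_mem_map]
    exact fun q _ => hinj (letter γ q)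
  · rw [← List.map_cons, List.forall_mem_map]
    exact fun q _ => hprox q
  · rw [← List.map_cons, ← hwp, List.isChain_map]
    exact FreeGroup.isReduced_toWord.imp fun a b hab =>
      hsep_flip a b fun h => by simp [h] at hab
  · rw [← List.map_cons, ← hwp, ← List.map_map, ← map_list_prod, ← lift_eq_prod_map_letter, hw,
      map_one]

end FreeGroup

def toEndHom (d : ℕ) : SL d →* Module.End ℝ (E d) where
  toFun := toEnd
  map_one' := by ext; simp [toEnd]
  map_mul' a b := by ext; simp [toEnd, Matrix.mulVec_mulVec]

theorem statement5_general (d r : ℕ) (ε : ℝ) (hε : 0 < ε)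
    (γ : Fin r → SL d)
    (hS : PrimalSchottky ε (Sum.elim γ (fun i => (γ i)⁻¹))) :
    Function.Injective (FreeGroup.lift γ : FreeGroup (Fin r) →* SL d) := by
  let e : Fin r × Bool → Fin r ⊕ Fin r := fun p => cond p.2 (.inl p.1) (.inr p.1)
  have he (p : Fin r × Bool) : Sum.elim γ (fun i => (γ i)⁻¹) (e p) = letter γ p := by
    rcases p with ⟨i, _ | _⟩ <;> rfl
  have he_inj : Function.Injective e := by
    rintro ⟨i, _ | _⟩ ⟨j, _ | _⟩ h <;> simp_all [e]
  obtain ⟨hprox, hsep⟩ := hS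
  exact lift_injective_of_schottky (toEndHom d) γ hε (fun p => he p ▸ hprox (e p))
    fun p q hpq => he p ▸ he q ▸ hsep (e p) (e q) (he_inj.ne hpq)

/-- a Schottky family generates a free group of rank `r`. -/
theorem statement5 (d r : ℕ) (hd : 2 ≤ d) (hr : 1 ≤ r) (ε : ℝ) (hε : 0 < ε)
    (γ : Fin r → SL d)
    (hdist : Function.Injective (Sum.elim γ (fun i => (γ i)⁻¹) : Fin r ⊕ Fin r → SL d))
    (hprox : ∀ i : Fin r ⊕ Fin r, IsProximal (toEnd (Sum.elim γ (fun i => (γ i)⁻¹) i)))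
    (hS : PrimalSchottky ε (Sum.elim γ (fun i => (γ i)⁻¹)))
    (hS' : DualSchottky ε (Sum.elim γ (fun i => (γ i)⁻¹))) :
    Function.Injective (FreeGroup.lift γ : FreeGroup (Fin r) →* SL d) :=
  statement5_general d r ε hε γ hS

end Amalgam
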